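/- Let k be a field of characteristic zero and i, j ≥ 1. Let P_{i,j} be the 'nested horizontal diamonds' poset with underlying set {s_1, …, s_i, u, v, t_1, …, t_j} and order relations s_p < u, s_p < v, u < t_q, v < t_q for all p ≤ i, q ≤ j, where u and v are incomparable, the s_p are pairwise incomparable, and the t_q are pairwise incomparable. Then the incidence R-ring k^a[P_{i,j}] is Koszul. -/

import Mathlib

noncomputable section
open MulOpposite
open scoped DirectSum

namespace P1605

--CHUNK_G_BEGIN
section GradedRings

variable (R : Type) [Ring R]

/-- A connected graded `R`-ring: a ring `A` together with an `ℕ`-grading by additive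
subgroups whose degree-zero part is a copy of `R` (via `emb`), with the multiplicative
grading property.  The (unique) augmentation `A → R` is part of the data. -/
structure GRing (A : Type) [Ring A] where
  emb : R →+* A
  aug : A →+* R
  deg : ℕ → AddSubgroup A
  internal : DirectSum.IsInternal deg
  emb_mem : ∀ r : R, emb r ∈ deg 0
  emb_surj : ∀ x ∈ deg 0, ∃ r : R, emb r = x
  emb_inj : Function.Injective emb
  mul_mem : ∀ {p q : ℕ} {x y : A}, x ∈ deg p → y ∈ deg q → x * y ∈ deg (p + q)
  aug_emb : ∀ r : R, aug (emb r) = r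
  aug_deg : ∀ (n : ℕ), ∀ x ∈ deg (n + 1), aug x = 0

variable {R}

/-- A connected graded ring is strongly graded when every multiplication map
`A_p ⊗ A_q → A_{p+q}` is surjective, i.e. each element of `A_{p+q}` is a sum of
products of elements of degrees `p` and `q`. -/
def GRing.StronglyGraded {A : Type} [Ring A] (G : GRing R A) : Prop :=
  ∀ p q : ℕ, ∀ z ∈ G.deg (p + q),
    z ∈ AddSubgroup.closure {w : A | ∃ x ∈ G.deg p, ∃ y ∈ G.deg q, w = x * y}

/-- A grading, compatible with a graded ring `G`, on an `A`-module `M`. -/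
structure GMod {A : Type} [Ring A] (G : GRing R A) (M : Type) [AddCommGroup M]
    [Module A M] where
  deg : ℕ → AddSubgroup M
  internal : DirectSum.IsInternal deg
  smul_mem : ∀ {p d : ℕ} {a : A} {x : M}, a ∈ G.deg p → x ∈ deg d → a • x ∈ deg (p + d)

/-- A resolution of `R` by projective graded left `A`-modules, in which the `n`-th
module is generated by its homogeneous component of degree `n`.  Existence of such a
resolution is the definition of Koszulity. -/
structure KResolution {A : Type} [Ring A] (G : GRing R A) where
  P : ℕ → Type
  [acg : ∀ n, AddCommGroup (P n)]
  [mod : ∀ n, Module A (P n)]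
  proj : ∀ n, Module.Projective A (P n)
  g : ∀ n, ℕ → AddSubgroup (P n)
  internal : ∀ n, DirectSum.IsInternal (g n)
  smul_mem : ∀ (n : ℕ) {p d : ℕ} {a : A} {x : P n},
    a ∈ G.deg p → x ∈ g n d → a • x ∈ g n (p + d)
  f : ∀ n, P (n + 1) →+ P n
  f_linear : ∀ (n : ℕ) (a : A) (x : P (n + 1)), f n (a • x) = a • f n x
  f_graded : ∀ (n d : ℕ), ∀ x ∈ g (n + 1) d, f n x ∈ g n d
  eps : P 0 →+ R
  eps_linear : ∀ (a : A) (x : P 0), eps (a • x) = G.aug a * eps x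
  eps_surj : Function.Surjective eps
  eps_graded : ∀ (d : ℕ), ∀ x ∈ g 0 (d + 1), eps x = 0
  comp0 : ∀ x : P 1, eps (f 0 x) = 0
  exact0 : ∀ x : P 0, eps x = 0 → x ∈ Set.range (f 0)
  comp : ∀ (n : ℕ) (x : P (n + 2)), f n (f (n + 1) x) = 0
  exact : ∀ (n : ℕ) (x : P (n + 1)), f n x = 0 → x ∈ Set.range (f (n + 1))
  gen : ∀ (n : ℕ) (x : P n),
    x ∈ AddSubgroup.closure {z : P n | ∃ (a : A), ∃ y ∈ g n n, z = a • y}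

/-- A connected graded `R`-ring is Koszul if `R` admits a resolution by projective
graded left `A`-modules such that the `n`-th module is generated in degree `n`. -/
def GRing.IsKoszul {A : Type} [Ring A] (G : GRing R A) : Prop :=
  Nonempty (KResolution G)

end GradedRings
--CHUNK_G_END

--CHUNK_P_BEGIN
section Posets

variable (k : Type) [Field k] (P : Type) [PartialOrder P]

/-- `ρ` is a length function for the graded poset `P`: every interval `[x, y]`
contains a maximal chain (a saturated chain for the covering relation `⋖`), and
every maximal chain from `x` to `y` has the same length `ρ x y`. -/
structure LengthFn {P : Type} [PartialOrder P] (ρ : P → P → ℕ) : Prop where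
  exists_chain : ∀ x y : P, x ≤ y → ∃ c : List P,
    c.Chain' (· ⋖ ·) ∧ c.head? = some x ∧ c.getLast? = some y
  chain_length : ∀ (x y : P) (c : List P),
    c.Chain' (· ⋖ ·) → c.head? = some x → c.getLast? = some y →
    c.length = ρ x y + 1

/-- `A`, together with the family `e`, is (a copy of) the incidence algebra of the
finite poset `P` over the field `k`: the elements `e x y`, for `x ≤ y`, form a
`k`-basis of `A` and multiply by `e x y * e z w = δ_{y z} · e x w`; the identity
is `∑ₓ e x x`. -/
structure IncAlg [Fintype P] [DecidableEq P] (A : Type) [Ring A] [Algebra k A] where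
  e : P → P → A
  e_not_le : ∀ x y : P, ¬ x ≤ y → e x y = 0
  e_mul : ∀ x y z w : P, x ≤ y → z ≤ w →
    e x y * e z w = if y = z then e x w else 0
  indep : LinearIndependent k (fun p : {p : P × P // p.1 ≤ p.2} => e p.1.1 p.1.2)
  span_top : Submodule.span k
    (Set.range (fun p : {p : P × P // p.1 ≤ p.2} => e p.1.1 p.1.2)) = ⊤
  one_def : (1 : A) = ∑ x : P, e x x

variable {k P}

/-- The canonical structure of connected graded `R`-ring (`R = k^P`) on the
incidence algebra of a finite graded poset: `e x y` is homogeneous of degree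
`l([x,y]) = ρ x y`, the degree-zero part is `R` embedded diagonally, and the
augmentation kills all `e x y` with `x ≠ y`. -/
structure IncGrading [Fintype P] [DecidableEq P] {A : Type} [Ring A] [Algebra k A]
    (inc : IncAlg k P A) (ρ : P → P → ℕ) (G : GRing (P → k) A) : Prop where
  emb_eq : ∀ f : P → k, G.emb f = ∑ x : P, f x • inc.e x x
  deg_eq : ∀ d : ℕ, (G.deg d : Set A) =
    ↑(Submodule.span k {a : A | ∃ x y : P, x ≤ y ∧ ρ x y = d ∧ a = inc.e x y})
  aug_eq : ∀ x y : P, x ≤ y →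
    G.aug (inc.e x y) = if x = y then Pi.single x (1 : k) else 0

end Posets
--CHUNK_P_END

/-- The "nested horizontal diamonds" poset on `{s_1, …, s_i, u, v, t_1, …, t_j}`
with `s_p < u`, `s_p < v`, `u < t_q`, `v < t_q`, where `u` and `v` are
incomparable, the `s_p` pairwise incomparable and the `t_q` pairwise incomparable. -/
inductive HD (i j : ℕ) : Type
  | s (p : Fin i) | u | v | t (q : Fin j)
deriving DecidableEq, Fintype

namespace HD

variable {i j : ℕ}

/-- The order relation of the nested horizontal diamonds poset. -/
def le : HD i j → HD i j → Prop
  | .s p, .s p' => p = p'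
  | .s _, .u => True
  | .s _, .v => True
  | .s _, .t _ => True
  | .u, .u => True
  | .u, .t _ => True
  | .v, .v => True
  | .v, .t _ => True
  | .t q, .t q' => q = q'
  | _, _ => False

instance : PartialOrder (HD i j) where
  le := le
  le_refl a := by cases a <;> simp [le]
  le_trans a b c hab hbc := by
    cases a <;> cases b <;> cases c <;> simp_all [le]
  le_antisymm a b hab hba := by
    cases a <;> cases b <;> simp_all [le]

end HD

/-!
`P_{i,j}` has a linear projective resolution of length two,
`0 → ⨁_{p,q} A e_{s_p}(-2) → ⨁_{x ⋖ y} A e_x(-1) → A → R → 0`.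
The middle map sends the generator of an edge `x ⋖ y` to `e_{xy}`; the left one sends the
generator of `(p, q)` to the diamond relation `(s_p ⋖ u ⋖ t_q) - (s_p ⋖ v ⋖ t_q)`.
Each term is a sum of left ideals `A e_x` generated by idempotents of degree `0`, hence projective
and generated in the degree of its shift. Exactness follows from a `k`-linear contracting homotopy
defined on the basis `e_{xy}`: it lifts `e_{xy}` along the last edge of a maximal chain from `x`
to `y`, and the only ambiguity, the two chains from `s_p` to `t_q`, is what the relations absorb.
-/

open scoped Matrix

theorem isInternal_of_projections {ι M : Type*} [DecidableEq ι] [AddCommGroup M]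
    (g : ι → AddSubgroup M) (π : ι → M →+ M) (mem : ∀ d x, π d x ∈ g d)
    (sum_eq : ∀ x, ∃ D : Finset ι, ∑ d ∈ D, π d x = x)
    (eq_self : ∀ d, ∀ x ∈ g d, π d x = x)
    (eq_zero : ∀ d d', d ≠ d' → ∀ x ∈ g d', π d x = 0) :
    DirectSum.IsInternal g := by
  have hπ : ∀ (y : ⨁ d, g d) d, π d (DirectSum.coeAddMonoidHom g y) = y d := by
    intro y
    induction y using DirectSum.induction_on with
    | zero => simp
    | of d' m =>
      intro d
      rw [DirectSum.coeAddMonoidHom_of]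
      by_cases h : d = d'
      · subst h
        simp [eq_self d m m.2]
      · rw [DirectSum.of_eq_of_ne _ _ _ h, eq_zero d d' h m m.2, ZeroMemClass.coe_zero]
    | add a b ha hb => intro d; simp [ha, hb]
  refine ⟨fun y y' h => DFinsupp.ext fun d => Subtype.ext ?_, fun x => ?_⟩
  · rw [← hπ, ← hπ, h]
  · obtain ⟨D, hD⟩ := sum_eq x
    exact ⟨∑ d ∈ D, DirectSum.of (fun d => g d) d ⟨π d x, mem d x⟩, by simp [hD]⟩

theorem isInternal_bot {ι M : Type*} [DecidableEq ι] [AddCommGroup M] [Subsingleton M] :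
    DirectSum.IsInternal fun _ : ι => (⊥ : AddSubgroup M) :=
  ⟨fun _ _ _ => Subsingleton.elim _ _, fun _ => ⟨0, Subsingleton.elim _ _⟩⟩

namespace GRing

variable {R A : Type} [Ring R] [Ring A] (G : GRing R A)

theorem one_mem_deg_zero : (1 : A) ∈ G.deg 0 := map_one G.emb ▸ G.emb_mem 1

instance gradedRing : GradedRing G.deg where
  one_mem := G.one_mem_deg_zero
  mul_mem _ _ _ _ := G.mul_mem
  toDecomposition := G.internal.chooseDecomposition

theorem eventually_sum_range_decompose (a : A) :
    ∀ᶠ N in Filter.atTop, ∑ d ∈ Finset.range N, (DirectSum.decompose G.deg a d : A) = a := by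
  classical
  obtain ⟨N₀, hN₀⟩ := Finset.exists_nat_subset_range (DirectSum.decompose G.deg a).support
  filter_upwards [Filter.eventually_ge_atTop N₀] with N hN
  rw [← Finset.sum_subset (hN₀.trans (Finset.range_subset_range.2 hN)),
    DirectSum.sum_support_decompose]
  intro d _ hd
  simpa using hd

def shiftDeg (n d : ℕ) : AddSubgroup A := if n ≤ d then G.deg (d - n) else ⊥

theorem shiftDeg_zero (d : ℕ) : G.shiftDeg 0 d = G.deg d := by simp [shiftDeg]

theorem mem_shiftDeg_self {n : ℕ} {a : A} (ha : a ∈ G.deg 0) : a ∈ G.shiftDeg n n := by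
  simpa [shiftDeg] using ha

theorem mul_mem_shiftDeg {p n d : ℕ} {a x : A} (ha : a ∈ G.deg p) (hx : x ∈ G.shiftDeg n d) :
    a * x ∈ G.shiftDeg n (p + d) := by
  unfold shiftDeg at *
  split_ifs at hx with h
  · rw [if_pos (by omega), show p + d - n = p + (d - n) by omega]
    exact G.mul_mem ha hx
  · rw [AddSubgroup.mem_bot.1 hx, mul_zero]
    exact zero_mem _

theorem mul_mem_shiftDeg_of_mem {m n d : ℕ} {x c : A} (hx : x ∈ G.shiftDeg (n + m) d)
    (hc : c ∈ G.deg m) : x * c ∈ G.shiftDeg n d := by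
  unfold shiftDeg at *
  split_ifs at hx with h
  · rw [if_pos (by omega), show d - n = d - (n + m) + m by omega]
    exact G.mul_mem hx hc
  · rw [AddSubgroup.mem_bot.1 hx, zero_mul]
    exact zero_mem _

def shiftProj (n d : ℕ) : A →+ A := if n ≤ d then GradedRing.proj G.deg (d - n) else 0

theorem shiftProj_mem (n d : ℕ) (a : A) : G.shiftProj n d a ∈ G.shiftDeg n d := by
  unfold shiftProj shiftDeg
  split_ifs
  · simp [GradedRing.proj_apply]
  · exact zero_mem _

theorem shiftProj_of_mem {n d : ℕ} {a : A} (ha : a ∈ G.shiftDeg n d) : G.shiftProj n d a = a := by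
  unfold shiftProj shiftDeg at *
  split_ifs at * with h
  · rw [GradedRing.proj_apply, DirectSum.decompose_of_mem_same _ ha]
  · exact (AddSubgroup.mem_bot.1 ha).symm

theorem shiftProj_of_mem_of_ne {n d d' : ℕ} {a : A} (hd : d ≠ d') (ha : a ∈ G.shiftDeg n d') :
    G.shiftProj n d a = 0 := by
  unfold shiftProj shiftDeg at *
  split_ifs at * with h h'
  · rw [GradedRing.proj_apply, DirectSum.decompose_of_mem_ne _ ha (by omega)]
  · rw [AddSubgroup.mem_bot.1 ha, map_zero]
  all_goals rfl

theorem shiftProj_mul_of_mem_zero {n d : ℕ} {a b : A} (hb : b ∈ G.deg 0) :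
    G.shiftProj n d (a * b) = G.shiftProj n d a * b := by
  unfold shiftProj
  split_ifs
  · simp only [GradedRing.proj_apply, DirectSum.coe_decompose_mul_of_right_mem_zero _ hb]
  · simp

theorem eventually_sum_range_shiftProj (n : ℕ) (a : A) :
    ∀ᶠ N in Filter.atTop, ∑ d ∈ Finset.range N, G.shiftProj n d a = a := by
  obtain ⟨N₀, hN₀⟩ := Filter.eventually_atTop.1 (G.eventually_sum_range_decompose a)
  filter_upwards [Filter.eventually_ge_atTop (n + N₀)] with N hN
  obtain ⟨M, rfl⟩ := Nat.exists_eq_add_of_le (le_of_add_le_left hN)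
  rw [Finset.sum_range_add, Finset.sum_eq_zero fun d hd => by
    simp [shiftProj, (Finset.mem_range.1 hd).not_ge]]
  simpa [shiftProj, GradedRing.proj_apply] using hN₀ M (by omega)

theorem dotProduct_mem_shiftDeg {E : Type} [Fintype E] {m n d : ℕ} {x c : E → A}
    (hx : ∀ e, x e ∈ G.shiftDeg (n + m) d) (hc : ∀ e, c e ∈ G.deg m) : x ⬝ᵥ c ∈ G.shiftDeg n d :=
  AddSubgroup.sum_mem _ fun e _ => G.mul_mem_shiftDeg_of_mem (hx e) (hc e)

end GRing

theorem exact_of_homotopy {M₁ M₂ M₃ : Type*} [AddZeroClass M₂] [Zero M₃] {f : M₁ → M₂}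
    {g : M₂ → M₃} (hgf : ∀ x, g (f x) = 0) (s : M₂ → M₁) (t : M₃ → M₂) (ht : t 0 = 0)
    (hst : ∀ y, f (s y) + t (g y) = y) : Function.Exact f g := fun y =>
  ⟨fun hy => ⟨s y, by simpa [hy, ht] using hst y⟩, by rintro ⟨x, rfl⟩; exact hgf x⟩

section PiLeftIdeal

variable {A E : Type} [Ring A]

def dotProductLinear [Fintype E] (c : E → A) : (E → A) →ₗ[A] A where
  toFun x := x ⬝ᵥ c
  map_add' x y := add_dotProduct x y c
  map_smul' a x := smul_dotProduct a x c

/-- For idempotents `ε e`, the left module `⨁ₑ A ε_e`, embedded in `E → A`. -/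
def piLeftIdeal (ε : E → A) : Submodule A (E → A) where
  carrier := {f | ∀ e, f e * ε e = f e}
  add_mem' hf hg e := by simp only [Pi.add_apply, add_mul, hf e, hg e]
  zero_mem' _ := zero_mul _
  smul_mem' a _ hf e := by simp only [Pi.smul_apply, smul_eq_mul, mul_assoc, hf e]

variable {ε : E → A}

theorem single_mem_piLeftIdeal [DecidableEq E] {e : E} {a : A} (ha : a * ε e = a) :
    Pi.single e a ∈ piLeftIdeal ε := by
  intro e'
  by_cases h : e' = e
  · subst h
    simpa using ha
  · simp [h]

theorem vecMul_mem_piLeftIdeal {E' : Type} [Fintype E'] {C : Matrix E' E A}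
    (hC : ∀ i e, C i e * ε e = C i e) (x : E' → A) : x ᵥ* C ∈ piLeftIdeal ε := by
  intro e
  simp only [Matrix.vecMul, dotProduct, Finset.sum_mul, mul_assoc, hC]

theorem projective_piLeftIdeal [Fintype E] [DecidableEq E] (hε : ∀ e, IsIdempotentElem (ε e)) :
    Module.Projective A (piLeftIdeal ε) :=
  Module.Projective.of_split (piLeftIdeal ε).subtype
    ((Matrix.diagonal ε).vecMulLinear.codRestrict _ fun x e => by
      simp [Matrix.vecMul_diagonal, mul_assoc, (hε e).eq])
    (LinearMap.ext fun x => Subtype.ext <| funext fun e => by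
      change (x.1 ᵥ* Matrix.diagonal ε) e = x.1 e
      rw [Matrix.vecMul_diagonal, x.2 e])

variable {R : Type} [Ring R]

def piDeg (G : GRing R A) (ε : E → A) (n d : ℕ) : AddSubgroup (piLeftIdeal ε) :=
  (AddSubgroup.pi Set.univ fun _ => G.shiftDeg n d).comap (piLeftIdeal ε).subtype.toAddMonoidHom

variable {G : GRing R A}

theorem mem_piDeg {n d : ℕ} {x : piLeftIdeal ε} :
    x ∈ piDeg G ε n d ↔ ∀ e, (x : E → A) e ∈ G.shiftDeg n d := by
  simp [piDeg, AddSubgroup.mem_pi]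

theorem smul_mem_piDeg {p n d : ℕ} {a : A} {x : piLeftIdeal ε} (ha : a ∈ G.deg p)
    (hx : x ∈ piDeg G ε n d) : a • x ∈ piDeg G ε n (p + d) :=
  mem_piDeg.2 fun e => G.mul_mem_shiftDeg ha (mem_piDeg.1 hx e)

def piShiftProj (G : GRing R A) (hε : ∀ e, ε e ∈ G.deg 0) (n d : ℕ) :
    piLeftIdeal ε →+ piLeftIdeal ε where
  toFun x := ⟨fun e => G.shiftProj n d (x.1 e), fun e => by
    rw [← G.shiftProj_mul_of_mem_zero (hε e), x.2 e]⟩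
  map_zero' := by ext; simp
  map_add' x y := by ext; simp

variable [Fintype E]

theorem isInternal_piDeg (hε : ∀ e, ε e ∈ G.deg 0) (n : ℕ) :
    DirectSum.IsInternal (piDeg G ε n) := by
  refine isInternal_of_projections _ (piShiftProj G hε n)
    (fun d x => mem_piDeg.2 fun e => G.shiftProj_mem n d _) (fun x => ?_)
    (fun d x hx => Subtype.ext <| funext fun e => G.shiftProj_of_mem (mem_piDeg.1 hx e))
    (fun d d' hd x hx => Subtype.ext <| funext fun e =>
      G.shiftProj_of_mem_of_ne hd (mem_piDeg.1 hx e))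
  obtain ⟨N, hN⟩ := (Filter.eventually_all.2 fun e =>
    G.eventually_sum_range_shiftProj n ((x : E → A) e)).exists
  refine ⟨Finset.range N, Subtype.ext <| funext fun e => ?_⟩
  simpa [AddSubmonoidClass.coe_finsetSum, Finset.sum_apply, piShiftProj] using hN e

/-- The graded module `⨁ₑ A ε_e(-n)`, whose generators `ε_e` sit in degree `n`. -/
def piGMod (G : GRing R A) (ε : E → A) (hε : ∀ e, ε e ∈ G.deg 0) (n : ℕ) :
    GMod G (piLeftIdeal ε) :=
  ⟨piDeg G ε n, isInternal_piDeg hε n, smul_mem_piDeg⟩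

end PiLeftIdeal

def GMod.GeneratedInDegree {R A M : Type} [Ring R] [Ring A] [AddCommGroup M] [Module A M]
    {G : GRing R A} (g : GMod G M) (n : ℕ) : Prop :=
  ∀ x : M, x ∈ AddSubgroup.closure {z | ∃ a : A, ∃ y ∈ g.deg n, z = a • y}

theorem piGMod_generatedInDegree {R A E : Type} [Ring R] [Ring A] [Fintype E] [DecidableEq E]
    {G : GRing R A} {ε : E → A} (hε : ∀ e, IsIdempotentElem (ε e)) (hε₀ : ∀ e, ε e ∈ G.deg 0)
    (n : ℕ) : (piGMod G ε hε₀ n).GeneratedInDegree n := by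
  let b : E → piLeftIdeal ε := fun e => ⟨Pi.single e (ε e), single_mem_piLeftIdeal (hε e).eq⟩
  have hb : ∀ e, b e ∈ piDeg G ε n n := fun e => mem_piDeg.2 fun e' => by
    by_cases h : e' = e
    · subst h
      simpa [b] using G.mem_shiftDeg_self (hε₀ e')
    · simp [b, h]
  intro x
  have hx : x = ∑ e, (x : E → A) e • b e := Subtype.ext <| funext fun e' => by
    simp [b, AddSubmonoidClass.coe_finsetSum, Finset.sum_apply, Pi.single_apply, x.2 e']
  rw [hx]
  exact AddSubgroup.sum_mem _ fun e _ => AddSubgroup.subset_closure ⟨_, _, hb e, rfl⟩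

namespace GRing

variable {R A : Type} [Ring R] [Ring A] (G : GRing R A)

def selfGMod : GMod G A := ⟨G.deg, G.internal, G.mul_mem⟩

def zeroGMod : GMod G PUnit :=
  ⟨fun _ => ⊥, isInternal_bot, fun _ _ => AddSubgroup.mem_bot.2 (Subsingleton.elim _ _)⟩

theorem isKoszul_of_exact_length_two {M₁ M₂ : Type} [AddCommGroup M₁] [Module A M₁]
    [AddCommGroup M₂] [Module A M₂] [Module.Projective A M₁] [Module.Projective A M₂]
    (g₁ : GMod G M₁) (g₂ : GMod G M₂) (hg₁ : g₁.GeneratedInDegree 1)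
    (hg₂ : g₂.GeneratedInDegree 2) (d₁ : M₁ →ₗ[A] A) (d₂ : M₂ →ₗ[A] M₁)
    (hd₁ : ∀ d, ∀ x ∈ g₁.deg d, d₁ x ∈ G.deg d) (hd₂ : ∀ d, ∀ x ∈ g₂.deg d, d₂ x ∈ g₁.deg d)
    (exact₀ : Function.Exact d₁ G.aug) (exact₁ : Function.Exact d₂ d₁)
    (hd₂_inj : Function.Injective d₂) : G.IsKoszul := by
  let P : ℕ → Type
    | 0 => A
    | 1 => M₁
    | 2 => M₂
    | _ + 3 => PUnit
  let acg : ∀ n, AddCommGroup (P n)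
    | 0 => inferInstanceAs (AddCommGroup A)
    | 1 => inferInstanceAs (AddCommGroup M₁)
    | 2 => inferInstanceAs (AddCommGroup M₂)
    | _ + 3 => inferInstanceAs (AddCommGroup PUnit)
  let mod : ∀ n, Module A (P n)
    | 0 => inferInstanceAs (Module A A)
    | 1 => inferInstanceAs (Module A M₁)
    | 2 => inferInstanceAs (Module A M₂)
    | _ + 3 => inferInstanceAs (Module A PUnit)
  let gm : ∀ n, GMod G (P n)
    | 0 => G.selfGMod
    | 1 => g₁
    | 2 => g₂
    | _ + 3 => G.zeroGMod
  let f : ∀ n, P (n + 1) →+ P n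
    | 0 => d₁.toAddMonoidHom
    | 1 => d₂.toAddMonoidHom
    | _ + 2 => 0
  refine ⟨{
    P := P
    acg := acg
    mod := mod
    f := f
    g := fun n => (gm n).deg
    internal := fun n => (gm n).internal
    smul_mem := fun n => (gm n).smul_mem
    eps := G.aug.toAddMonoidHom
    eps_surj := fun r => ⟨G.emb r, G.aug_emb r⟩
    eps_graded := G.aug_deg
    eps_linear := map_mul G.aug
    comp0 := fun x => exact₀.apply_apply_eq_zero x
    exact0 := fun x hx => (exact₀ x).1 hx
    proj := ?_
    f_linear := ?_
    f_graded := ?_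
    comp := ?_
    exact := ?_
    gen := ?_ }⟩
  · rintro (_ | _ | _ | n) <;> infer_instance
  · rintro (_ | _ | _ | n) a x
    exacts [d₁.map_smul a x, d₂.map_smul a x, (smul_zero a).symm, Subsingleton.elim _ _]
  · rintro (_ | _ | _ | n) d x hx
    exacts [hd₁ d x hx, hd₂ d x hx, zero_mem _, zero_mem _]
  · rintro (_ | _ | n) x
    exacts [exact₁.apply_apply_eq_zero x, map_zero d₂, rfl]
  · rintro (_ | _ | _ | n) x hx
    exacts [(exact₁ x).1 hx, ⟨0, (hd₂_inj <| hx.trans (map_zero d₂).symm).symm⟩,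
      ⟨0, Subsingleton.elim _ _⟩, ⟨0, Subsingleton.elim _ _⟩]
  · rintro (_ | _ | _ | n) x
    exacts [AddSubgroup.subset_closure ⟨x, 1, G.one_mem_deg_zero, (mul_one x).symm⟩, hg₁ x, hg₂ x,
      Subsingleton.elim x 0 ▸ zero_mem _]

end GRing

theorem LengthFn.apply_self {P : Type} [PartialOrder P] {ρ : P → P → ℕ} (hρ : LengthFn ρ)
    (x : P) : ρ x x = 0 := by
  simpa using (hρ.chain_length x x [x] (List.isChain_singleton x) rfl rfl).symm

theorem LengthFn.apply_of_covBy {P : Type} [PartialOrder P] {ρ : P → P → ℕ} (hρ : LengthFn ρ)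
    {x y : P} (h : x ⋖ y) : ρ x y = 1 := by
  simpa using (hρ.chain_length x y [x, y] (List.isChain_pair.2 h) rfl rfl).symm

namespace IncAlg

variable {k P A : Type} [Field k] [PartialOrder P] [Fintype P] [DecidableEq P] [Ring A]
  [Algebra k A] (inc : IncAlg k P A)

theorem e_mul_e {x y z : P} (hxy : x ≤ y) (hyz : y ≤ z) : inc.e x y * inc.e y z = inc.e x z := by
  rw [inc.e_mul x y y z hxy hyz, if_pos rfl]

theorem isIdempotentElem_e (x : P) : IsIdempotentElem (inc.e x x) :=
  inc.e_mul_e le_rfl le_rfl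

def basis : Module.Basis {p : P × P // p.1 ≤ p.2} k A :=
  .mk inc.indep inc.span_top.ge

theorem basis_apply (p : {p : P × P // p.1 ≤ p.2}) : inc.basis p = inc.e p.1.1 p.1.2 :=
  Module.Basis.mk_apply _ _ _

theorem induction_on {motive : A → Prop} (a : A) (e : ∀ x y, x ≤ y → motive (inc.e x y))
    (zero : motive 0) (add : ∀ a b, motive a → motive b → motive (a + b))
    (smul : ∀ (c : k) a, motive a → motive (c • a)) : motive a := by
  refine Submodule.span_induction (by rintro _ ⟨p, rfl⟩; exact e _ _ p.2) zero
    (fun a b _ _ => add a b) (fun c a _ => smul c a) (inc.span_top.ge (Submodule.mem_top (x := a)))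

theorem basis_repr_e {x y z w : P} (hxy : x ≤ y) (hzw : z ≤ w) :
    inc.basis.repr (inc.e z w) ⟨(x, y), hxy⟩ = if z = x ∧ w = y then 1 else 0 := by
  rw [← inc.basis_apply ⟨(z, w), hzw⟩, Module.Basis.repr_self, Finsupp.single_apply]
  simp

theorem mem_span_of_mul_e_eq {x : P} {a : A} (ha : a * inc.e x x = a) :
    a ∈ Submodule.span k {b | ∃ z ≤ x, b = inc.e z x} := by
  rw [← ha]
  refine inc.induction_on (motive := fun a => a * inc.e x x ∈ _) a (fun z w hzw => ?_)
    (by simp) (fun a b ha hb => by rw [add_mul]; exact add_mem ha hb)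
    (fun c a ha => by rw [smul_mul_assoc]; exact Submodule.smul_mem _ c ha)
  rw [inc.e_mul z w x x hzw le_rfl]
  split_ifs with h
  · exact Submodule.subset_span ⟨z, h ▸ hzw, rfl⟩
  · exact zero_mem _

theorem piLeftIdeal_induction_on {E : Type} [Fintype E] [DecidableEq E] {σ : E → P}
    {motive : (E → A) → Prop} {x : E → A} (hx : x ∈ piLeftIdeal fun e => inc.e (σ e) (σ e))
    (single : ∀ e z, z ≤ σ e → motive (Pi.single e (inc.e z (σ e))))
    (zero : motive 0) (add : ∀ a b, motive a → motive b → motive (a + b))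
    (smul : ∀ (c : k) a, motive a → motive (c • a)) : motive x := by
  rw [← Finset.univ_sum_single x]
  refine Finset.sum_induction _ motive add zero fun e _ => ?_
  refine Submodule.span_induction (fun _ ⟨z, hz, hb⟩ => hb ▸ single e z hz) (by simpa using zero)
    (fun a b _ _ ha hb => by rw [Pi.single_add]; exact add _ _ ha hb)
    (fun c a _ ha => by simpa [Pi.single_smul] using smul c _ ha)
    (inc.mem_span_of_mul_e_eq (hx e))

end IncAlg

namespace IncGrading

variable {k P A : Type} [Field k] [PartialOrder P] [Fintype P] [DecidableEq P] [Ring A]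
  [Algebra k A] {inc : IncAlg k P A} {ρ : P → P → ℕ} {G : GRing (P → k) A}

theorem e_mem_deg (hG : IncGrading inc ρ G) {x y : P} (h : x ≤ y) :
    inc.e x y ∈ G.deg (ρ x y) := by
  show inc.e x y ∈ (G.deg (ρ x y) : Set A)
  rw [hG.deg_eq]
  exact Submodule.subset_span ⟨x, y, h, rfl, rfl⟩

theorem emb_smul (hG : IncGrading inc ρ G) (c : k) (f : P → k) : G.emb (c • f) = c • G.emb f := by
  simp [hG.emb_eq, Finset.smul_sum, smul_smul]

theorem aug_smul (hG : IncGrading inc ρ G) (c : k) (a : A) : G.aug (c • a) = c • G.aug a := by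
  have h1 : c • (1 : A) = G.emb (fun _ => c) := by
    simp [hG.emb_eq, inc.one_def, Finset.smul_sum]
  rw [← smul_one_mul, h1, map_mul, G.aug_emb]
  rfl

theorem emb_aug_e (hG : IncGrading inc ρ G) {x y : P} (h : x ≤ y) :
    G.emb (G.aug (inc.e x y)) = if x = y then inc.e x x else 0 := by
  rw [hG.aug_eq x y h]
  split_ifs
  · simp [hG.emb_eq, Pi.single_apply]
  · simp [hG.emb_eq]

end IncGrading

namespace HD

variable {i j : ℕ}

theorem le_def {x y : HD i j} : x ≤ y ↔ HD.le x y := Iff.rfl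

@[simp] theorem s_le_u (p : Fin i) : (s p : HD i j) ≤ u := trivial
@[simp] theorem s_le_v (p : Fin i) : (s p : HD i j) ≤ v := trivial
@[simp] theorem u_le_t (q : Fin j) : (u : HD i j) ≤ t q := trivial
@[simp] theorem v_le_t (q : Fin j) : (v : HD i j) ≤ t q := trivial

/-- The covering relations of `HD i j`, i.e. the edges of its Hasse diagram. -/
inductive Edge (i j : ℕ) : Type
  | su (p : Fin i) | sv (p : Fin i) | ut (q : Fin j) | vt (q : Fin j)
deriving DecidableEq, Fintype

def Edge.src : Edge i j → HD i j
  | su p => s p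
  | sv p => s p
  | ut _ => u
  | vt _ => v

def Edge.tgt : Edge i j → HD i j
  | su _ => u
  | sv _ => v
  | ut q => t q
  | vt q => t q

theorem Edge.src_covBy_tgt (e : Edge i j) : e.src ⋖ e.tgt := by
  refine ⟨lt_of_le_not_ge ?_ ?_, fun c h₁ h₂ => ?_⟩ <;> cases e <;>
    (try cases c) <;> simp_all [lt_iff_le_not_ge, le_def, HD.le, src, tgt, eq_comm]

variable {k A : Type} [Field k] [Ring A] [Algebra k A] (inc : IncAlg k (HD i j) A)

abbrev edgeModule : Submodule A (Edge i j → A) := piLeftIdeal fun e => inc.e e.src e.src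

abbrev relModule : Submodule A (Fin i × Fin j → A) :=
  piLeftIdeal fun pq => inc.e (s pq.1) (s pq.1)

def edgeVec (e : Edge i j) : A := inc.e e.src e.tgt

/-- Row `(p, q)` encodes the relation `e_{s_p u} e_{u t_q} - e_{s_p v} e_{v t_q} = 0` of the
diamond `s_p < u, v < t_q`. -/
def relMatrix : Matrix (Fin i × Fin j) (Edge i j) A :=
  Matrix.of fun pq =>
    Pi.single (.ut pq.2) (inc.e (s pq.1) u) - Pi.single (.vt pq.2) (inc.e (s pq.1) v)

theorem relMatrix_mulVec_edgeVec : relMatrix inc *ᵥ edgeVec inc = 0 := by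
  ext pq
  change (Pi.single _ _ - Pi.single _ _) ⬝ᵥ edgeVec inc = 0
  simp [sub_dotProduct, edgeVec, Edge.src, Edge.tgt, inc.e_mul_e]

theorem relMatrix_mul_e_src (pq : Fin i × Fin j) (e : Edge i j) :
    relMatrix inc pq e * inc.e e.src e.src = relMatrix inc pq e := by
  cases e <;> simp [relMatrix, Pi.single_apply, Edge.src] <;> split_ifs <;> simp [inc.e_mul_e]

def d₁ : edgeModule inc →ₗ[A] A := (dotProductLinear (edgeVec inc)).domRestrict _

def d₂ : relModule inc →ₗ[A] edgeModule inc :=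
  ((relMatrix inc).vecMulLinear.domRestrict _).codRestrict _ fun _ =>
    vecMul_mem_piLeftIdeal (relMatrix_mul_e_src inc) _

/-- `homotopy₀` lifts `e z w` along the last edge of a maximal chain from `z` to `w` (through `u`
when `z = s p`, `w = t q`). -/
def homotopy₀OnBasis : HD i j → HD i j → Edge i j → A
  | s p, u => Pi.single (.su p) (inc.e (s p) (s p))
  | s p, v => Pi.single (.sv p) (inc.e (s p) (s p))
  | s p, t q => Pi.single (.ut q) (inc.e (s p) u)
  | u, t q => Pi.single (.ut q) (inc.e u u)
  | v, t q => Pi.single (.vt q) (inc.e v v)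
  | _, _ => 0

def homotopy₀ : A →ₗ[k] Edge i j → A :=
  inc.basis.constr k fun p => homotopy₀OnBasis inc p.1.1 p.1.2

def homotopy₁ : (Edge i j → A) →ₗ[k] Fin i × Fin j → A :=
  LinearMap.pi fun pq => ((inc.basis.coord ⟨(s pq.1, v), s_le_v pq.1⟩).comp
    (LinearMap.proj (Edge.vt pq.2))).smulRight (-inc.e (s pq.1) (s pq.1))

theorem homotopy₀_e {z w : HD i j} (h : z ≤ w) :
    homotopy₀ inc (inc.e z w) = homotopy₀OnBasis inc z w := by
  rw [← inc.basis_apply ⟨(z, w), h⟩, homotopy₀, Module.Basis.constr_basis]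

theorem homotopy₁_apply (x : Edge i j → A) (pq : Fin i × Fin j) :
    homotopy₁ inc x pq = -(inc.basis.repr (x (.vt pq.2)) ⟨(s pq.1, v), s_le_v pq.1⟩ •
      inc.e (s pq.1) (s pq.1)) := by
  simp [homotopy₁]

theorem homotopy₁_single_eq_zero {e : Edge i j} (he : ∀ q, e ≠ .vt q) (a : A) :
    homotopy₁ inc (Pi.single e a) = 0 := by
  ext pq
  simp [homotopy₁_apply, (he pq.2).symm]

theorem homotopy₁_single_vt_v (q : Fin j) :
    homotopy₁ inc (Pi.single (.vt q) (inc.e v v)) = 0 := by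
  ext ⟨p', q'⟩
  rcases eq_or_ne q' q with rfl | hq
  · simp [homotopy₁_apply, inc.basis_repr_e]
  · simp [homotopy₁_apply, hq]

theorem homotopy₁_single_vt_s (p : Fin i) (q : Fin j) :
    homotopy₁ inc (Pi.single (.vt q) (inc.e (s p) v)) =
      -Pi.single (p, q) (inc.e (s p) (s p)) := by
  ext ⟨p', q'⟩
  rcases eq_or_ne q' q with rfl | hq
  · rcases eq_or_ne p' p with rfl | hp
    · simp [homotopy₁_apply, inc.basis_repr_e]
    · simp [homotopy₁_apply, inc.basis_repr_e, hp, hp.symm]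
  · simp [homotopy₁_apply, hq]

theorem single_vecMul_relMatrix (p : Fin i) (q : Fin j) (a : A) :
    Pi.single (p, q) a ᵥ* relMatrix inc =
      Pi.single (.ut q) (a * inc.e (s p) u) - Pi.single (.vt q) (a * inc.e (s p) v) := by
  ext e
  simp [Matrix.single_vecMul, relMatrix, Pi.single_apply, mul_sub]

variable {inc}

theorem homotopy₀_mem (b : A) : homotopy₀ inc b ∈ edgeModule inc := by
  refine inc.induction_on (motive := (homotopy₀ inc · ∈ edgeModule inc)) b (fun z w h => ?_)
    (by simp) (fun a b ha hb => by rw [map_add]; exact add_mem ha hb)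
    (fun c a ha => by rw [map_smul, ← algebraMap_smul A]; exact Submodule.smul_mem _ _ ha)
  rw [homotopy₀_e inc h]
  cases z <;> cases w <;> simp only [homotopy₀OnBasis] <;>
    first | exact zero_mem _ | exact single_mem_piLeftIdeal (by simp [Edge.src, inc.e_mul_e])

theorem homotopy₁_mem (x : Edge i j → A) : homotopy₁ inc x ∈ relModule inc := fun pq => by
  rw [homotopy₁_apply, neg_mul, smul_mul_assoc, (inc.isIdempotentElem_e _).eq]

theorem homotopy₀_dotProduct_add_emb_aug (hG : IncGrading inc ρ G) (b : A) :
    homotopy₀ inc b ⬝ᵥ edgeVec inc + G.emb (G.aug b) = b := by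
  induction b using inc.induction_on with
  | e z w h =>
    rw [homotopy₀_e inc h, hG.emb_aug_e h]
    cases z <;> cases w <;> simp_all [le_def, HD.le, homotopy₀OnBasis, edgeVec, Edge.src, Edge.tgt,
      inc.e_mul_e]
  | zero => simp
  | add a b ha hb =>
    rw [map_add, map_add, map_add, add_dotProduct]
    conv_rhs => rw [← ha, ← hb]
    abel
  | smul c a ha => rw [map_smul, smul_dotProduct, hG.aug_smul, hG.emb_smul, ← smul_add, ha]

theorem homotopy₀_dotProduct_add_homotopy₁_vecMul {x : Edge i j → A} (hx : x ∈ edgeModule inc) :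
    homotopy₀ inc (x ⬝ᵥ edgeVec inc) + homotopy₁ inc x ᵥ* relMatrix inc = x := by
  refine inc.piLeftIdeal_induction_on (motive := fun x =>
      homotopy₀ inc (x ⬝ᵥ edgeVec inc) + homotopy₁ inc x ᵥ* relMatrix inc = x) hx
    (fun e z h => ?_) (by simp)
    (fun a b ha hb => ?_) (fun c a ha => ?_)
  · rw [single_dotProduct, edgeVec, inc.e_mul_e h (Edge.src_covBy_tgt e).le,
      homotopy₀_e inc (h.trans (Edge.src_covBy_tgt e).le)]
    cases e <;> cases z <;> simp_all [le_def, HD.le, homotopy₀OnBasis, Edge.src, Edge.tgt,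
      homotopy₁_single_eq_zero, homotopy₁_single_vt_v, homotopy₁_single_vt_s,
      single_vecMul_relMatrix, Matrix.neg_vecMul, inc.e_mul_e, -Matrix.single_vecMul]
  · rw [add_dotProduct, map_add, map_add, Matrix.add_vecMul]
    conv_rhs => rw [← ha, ← hb]
    abel
  · rw [smul_dotProduct, map_smul, map_smul, Matrix.smul_vecMul, ← smul_add, ha]

theorem homotopy₁_vecMul {x : Fin i × Fin j → A} (hx : x ∈ relModule inc) :
    homotopy₁ inc (x ᵥ* relMatrix inc) = x := by
  refine inc.piLeftIdeal_induction_on (σ := fun pq => s pq.1)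
    (motive := fun x => homotopy₁ inc (x ᵥ* relMatrix inc) = x) hx (fun pq z h => ?_) (by simp)
    (fun a b ha hb => by rw [Matrix.add_vecMul, map_add, ha, hb])
    (fun c a ha => by rw [Matrix.smul_vecMul, map_smul, ha])
  obtain ⟨p, q⟩ := pq
  obtain rfl : z = s p := by cases z <;> simp_all [le_def, HD.le]
  rw [single_vecMul_relMatrix, map_sub, homotopy₁_single_eq_zero _ (by simp),
    inc.e_mul_e le_rfl (s_le_v p), homotopy₁_single_vt_s, zero_sub, neg_neg]

variable {ρ : HD i j → HD i j → ℕ} {G : GRing (HD i j → k) A}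

theorem d₁_apply (x : edgeModule inc) : d₁ inc x = (x : Edge i j → A) ⬝ᵥ edgeVec inc := rfl

theorem d₂_apply (x : relModule inc) :
    (d₂ inc x : Edge i j → A) = (x : Fin i × Fin j → A) ᵥ* relMatrix inc := rfl

theorem d₁_d₂ (x : relModule inc) : d₁ inc (d₂ inc x) = 0 := by
  rw [d₁_apply, d₂_apply, ← Matrix.dotProduct_mulVec, relMatrix_mulVec_edgeVec, dotProduct_zero]

theorem aug_d₁ (hG : IncGrading inc ρ G) (x : edgeModule inc) : G.aug (d₁ inc x) = 0 := by
  simp [d₁_apply, dotProduct, edgeVec, hG.aug_eq _ _ (Edge.src_covBy_tgt _).le,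
    (Edge.src_covBy_tgt _).ne]

theorem exact_d₁_aug (hG : IncGrading inc ρ G) : Function.Exact (d₁ inc) G.aug :=
  exact_of_homotopy (aug_d₁ hG) (fun b => ⟨homotopy₀ inc b, homotopy₀_mem b⟩) G.emb (map_zero _)
    (homotopy₀_dotProduct_add_emb_aug hG)

theorem exact_d₂_d₁ : Function.Exact (d₂ inc) (d₁ inc) := by
  refine exact_of_homotopy d₁_d₂ (fun y => ⟨homotopy₁ inc y.1, homotopy₁_mem y.1⟩)
    (fun b => ⟨homotopy₀ inc b, homotopy₀_mem b⟩) (Subtype.ext (map_zero _)) fun y => ?_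
  rw [add_comm]
  exact Subtype.ext (homotopy₀_dotProduct_add_homotopy₁_vecMul y.2)

theorem d₂_injective : Function.Injective (d₂ inc) := fun x y h => Subtype.ext <| by
  rw [← homotopy₁_vecMul x.2, ← homotopy₁_vecMul y.2, ← d₂_apply, ← d₂_apply, h]

theorem e_mem_deg_one (hρ : LengthFn ρ) (hG : IncGrading inc ρ G) {x y : HD i j} (h : x ⋖ y) :
    inc.e x y ∈ G.deg 1 :=
  hρ.apply_of_covBy h ▸ hG.e_mem_deg h.le

theorem relMatrix_mem_deg_one (hρ : LengthFn ρ) (hG : IncGrading inc ρ G) (pq : Fin i × Fin j)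
    (e : Edge i j) : relMatrix inc pq e ∈ G.deg 1 := by
  have := e_mem_deg_one hρ hG (Edge.src_covBy_tgt (.su pq.1))
  have := e_mem_deg_one hρ hG (Edge.src_covBy_tgt (.sv pq.1))
  cases e <;> simp only [relMatrix, Matrix.of_apply, Pi.sub_apply, Pi.single_apply] <;>
    split_ifs <;> simp_all [Edge.src, Edge.tgt]

theorem d₁_mem_deg (hρ : LengthFn ρ) (hG : IncGrading inc ρ G) (d : ℕ) :
    ∀ x ∈ piDeg G (fun e : Edge i j => inc.e e.src e.src) 1 d, d₁ inc x ∈ G.deg d := fun _ hx =>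
  G.shiftDeg_zero d ▸ G.dotProduct_mem_shiftDeg (m := 1) (n := 0) (mem_piDeg.1 hx)
    fun e => e_mem_deg_one hρ hG (Edge.src_covBy_tgt e)

theorem d₂_mem_piDeg (hρ : LengthFn ρ) (hG : IncGrading inc ρ G) (d : ℕ) :
    ∀ x ∈ piDeg G (fun pq : Fin i × Fin j => inc.e (s pq.1) (s pq.1)) 2 d,
      d₂ inc x ∈ piDeg G (fun e : Edge i j => inc.e e.src e.src) 1 d := fun _ hx =>
  mem_piDeg.2 fun e => G.dotProduct_mem_shiftDeg (m := 1) (n := 1) (mem_piDeg.1 hx)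
    fun pq => relMatrix_mem_deg_one hρ hG pq e

end HD

theorem horizontal_diamonds_koszul_general
    (k : Type) [Field k] (i j : ℕ)
    (ρ : HD i j → HD i j → ℕ) (hρ : LengthFn ρ)
    (A : Type) [Ring A] [Algebra k A] (inc : IncAlg k (HD i j) A)
    (GA : GRing (HD i j → k) A) (hGA : IncGrading inc ρ GA) :
    GA.IsKoszul := by
  have hidem (x : HD i j) := inc.isIdempotentElem_e x
  have hdeg₀ (x : HD i j) : inc.e x x ∈ GA.deg 0 := hρ.apply_self x ▸ hGA.e_mem_deg le_rfl
  have := projective_piLeftIdeal fun e : HD.Edge i j => hidem e.src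
  have := projective_piLeftIdeal fun pq : Fin i × Fin j => hidem (.s pq.1)
  exact GA.isKoszul_of_exact_length_two (piGMod GA _ (fun _ => hdeg₀ _) 1)
    (piGMod GA _ (fun _ => hdeg₀ _) 2) (piGMod_generatedInDegree (fun _ => hidem _) _ 1)
    (piGMod_generatedInDegree (fun _ => hidem _) _ 2) (HD.d₁ inc) (HD.d₂ inc)
    (HD.d₁_mem_deg hρ hGA) (HD.d₂_mem_piDeg hρ hGA) (HD.exact_d₁_aug hGA) HD.exact_d₂_d₁
    HD.d₂_injective

/-- Let `k` be a field of characteristic zero and `i, j ≥ 1`.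
The incidence ring of the nested horizontal diamonds poset
`P_{i,j} = {s_1, …, s_i, u, v, t_1, …, t_j}` is a Koszul `R`-ring. -/
theorem horizontal_diamonds_koszul
    (k : Type) [Field k] [CharZero k] (i j : ℕ) (hi : 1 ≤ i) (hj : 1 ≤ j)
    (ρ : HD i j → HD i j → ℕ) (hρ : LengthFn ρ)
    (A : Type) [Ring A] [Algebra k A] (inc : IncAlg k (HD i j) A)
    (GA : GRing (HD i j → k) A) (hGA : IncGrading inc ρ GA) :
    GA.IsKoszul :=
  horizontal_diamonds_koszul_general k i j ρ hρ A inc GA hGA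

end P1605
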